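/- For any (J, φ₁)-paraholomorphic map f from an almost para-Hermitian manifold N^{2m} to a para-Sasakian manifold M₁^{2n₁+1}, the tension field τ(f) is a section of the contact distribution D₁ = ker η₁, i.e. g₁(τ(f), ξ₁) = 0. -/
import Mathlib


/-- For any `(J, φ₁)`-paraholomorphic map `f` from an almost para-Hermitian
manifold `N^{2m}` to a para-Sasakian manifold `M₁^{2n₁+1}`, the tension field
`τ(f)` is a section of the contact distribution `D₁ = ker η₁`, i.e.
`g₁(τ(f), ξ₁) = 0`.
`V` models vector fields on `N` with its almost paracomplex structure `J` and
local orthonormal frame `{e'₁,…,e'_m, Je'₁,…,Je'_m}`; `W` models sections of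
the pullback bundle `f⁻¹(TM₁)` on which `φ₁`, `ξ₁`, `g₁` act; `nabla` is the
Levi-Civita connection of `N` and `D` the pullback connection `∇̃`. -/
theorem paraholomorphic_tension_in_contact_distribution
    {V W : Type*} [AddCommGroup V] [Module ℝ V] [AddCommGroup W] [Module ℝ W]
    (J : V →ₗ[ℝ] V) (F : V →ₗ[ℝ] W)
    (φ₁ : W →ₗ[ℝ] W) (ξ₁ : W) (g₁ : W →ₗ[ℝ] W →ₗ[ℝ] ℝ)
    (nabla : V → V → V) (D : V → W → W)
    (m : ℕ) (e : Fin m → V)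
    (hJ : ∀ X : V, J (J X) = X)
    -- g₁ is symmetric and φ₁ is skew-symmetric with respect to g₁
    (hgsym : ∀ w w' : W, g₁ w w' = g₁ w' w)
    (hskew : ∀ w w' : W, g₁ (φ₁ w) w' = -(g₁ w (φ₁ w')))
    -- para-Sasakian: ∇_X ξ₁ = −φ₁ X, pulled back along f
    (hξ : ∀ X : V, D X ξ₁ = -(φ₁ (F X)))
    -- the image of f_* is orthogonal to ξ₁
    (him : ∀ X : V, g₁ (F X) ξ₁ = 0)
    -- metric compatibility of the pullback connection applied to g₁(f_*Y, ξ₁) = 0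
    (hcomp : ∀ X Y : V, g₁ (D X (F Y)) ξ₁ + g₁ (F Y) (D X ξ₁) = 0)
    -- f is (J, φ₁)-paraholomorphic
    (hhol : ∀ X : V, F (J X) = φ₁ (F X)) :
    g₁ ((∑ i, (D (e i) (F (e i)) - F (nabla (e i) (e i))))
        - (∑ i, (D (J (e i)) (F (J (e i))) - F (nabla (J (e i)) (J (e i))))))
      ξ₁ = 0 := by
  have hzero : ∀ w : W, g₁ w (φ₁ w) = 0 := by
    intro w
    have h1 := hskew w w
    have h2 := hgsym (φ₁ w) w
    linarith
  have key : ∀ X : V, g₁ (D X (F X) - F (nabla X X)) ξ₁ = 0 := by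
    intro X
    have h1 := hcomp X X
    rw [hξ X] at h1
    simp only [map_sub, map_neg, LinearMap.sub_apply, LinearMap.neg_apply] at h1 ⊢
    rw [him, hzero (F X)] at *
    linarith
  calc g₁ ((∑ i, (D (e i) (F (e i)) - F (nabla (e i) (e i))))
        - (∑ i, (D (J (e i)) (F (J (e i))) - F (nabla (J (e i)) (J (e i)))))) ξ₁
      = (∑ i, g₁ (D (e i) (F (e i)) - F (nabla (e i) (e i))) ξ₁)
        - (∑ i, g₁ (D (J (e i)) (F (J (e i))) - F (nabla (J (e i)) (J (e i)))) ξ₁) := by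
        simp [map_sub, map_sum]
    _ = 0 := by
        have keyD : ∀ X : V, g₁ (D X (F X)) ξ₁ = 0 := by
          intro X
          have := key X
          simp only [map_sub, LinearMap.sub_apply, him] at this
          linarith
        simp [keyD, him]
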